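/- Let β ≥ 1 and let p ∈ (0,1) satisfy p^β < β + 1 − √((β+1)² − 1). Let n ≥ 1 and let X, Y be n×n complex matrices with 0 ≤ X ≤ Y ≤ I, Tr X = p, and Tr Y = 1. Then ‖[X, Y^β]‖₁ ≤ 9·p·(1 − p^β). -/

import Mathlib

/-!
The bound holds with room to spare: `‖[X, B]‖₁ ≤ 2 Tr X` for every Hermitian `B` with `B² ≤ I`,
and `B = Y^β` is such a matrix because `0 ≤ Y ≤ I`. The commutator is skew-Hermitian, so in an
eigenbasis `(vⱼ)` of `i[X, B]` its trace norm is `Σⱼ |⟨vⱼ, [X, B] vⱼ⟩| ≤ 2 Σⱼ |⟨√X vⱼ, √X B vⱼ⟩|`,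
which Cauchy–Schwarz bounds by `2 √(Tr X) √(Tr BXB) ≤ 2 Tr X`. The hypothesis on `p` forces
`p^β ≤ 1/2`, and then `2p ≤ 9p(1 - p^β)`.
-/

open scoped ComplexOrder

/-- The trace norm of a complex matrix: `Tr √(Aᴴ A)`, the sum of singular values. -/
noncomputable def traceNorm {n : ℕ} (A : Matrix (Fin n) (Fin n) ℂ) : ℝ :=
  (((Matrix.posSemidef_conjTranspose_mul_self A).isHermitian.eigenvectorUnitary :
      Matrix (Fin n) (Fin n) ℂ) *
    Matrix.diagonal (fun i => ((Real.sqrt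
      ((Matrix.posSemidef_conjTranspose_mul_self A).isHermitian.eigenvalues i) : ℝ) : ℂ)) *
    (star (Matrix.posSemidef_conjTranspose_mul_self A).isHermitian.eigenvectorUnitary :
      Matrix (Fin n) (Fin n) ℂ)).trace.re

/-- For a Hermitian matrix `Y = Σⱼ yⱼ |φⱼ⟩⟨φⱼ|`, the matrix `f(Y) = Σⱼ f(yⱼ) |φⱼ⟩⟨φⱼ|`
(junk value `0` if `Y` is not Hermitian). -/
noncomputable def matFun {n : ℕ} (f : ℝ → ℝ) (Y : Matrix (Fin n) (Fin n) ℂ) :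
    Matrix (Fin n) (Fin n) ℂ :=
  if hY : Y.IsHermitian then
    (hY.eigenvectorUnitary : Matrix (Fin n) (Fin n) ℂ) *
      Matrix.diagonal (fun i => (f (hY.eigenvalues i) : ℂ)) *
      (star hY.eigenvectorUnitary : Matrix (Fin n) (Fin n) ℂ)
  else 0

open Matrix
open scoped MatrixOrder

lemma sub_sqrt_sq_sub_one_le_half {x : ℝ} (hx : 2 ≤ x) : x - √(x ^ 2 - 1) ≤ 1 / 2 := by
  have : x - 1 / 2 ≤ √(x ^ 2 - 1) := Real.le_sqrt_of_sq_le (by nlinarith)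
  linarith

lemma cfc_rpow_mul_self_le_one {A : Type*} [TopologicalSpace A] [Ring A] [StarRing A]
    [PartialOrder A] [StarOrderedRing A] [Algebra ℝ A]
    [ContinuousFunctionalCalculus ℝ A IsSelfAdjoint] [NonnegSpectrumClass ℝ A]
    {a : A} (ha₀ : 0 ≤ a) (ha₁ : a ≤ 1) {β : ℝ} (hβ : 0 ≤ β) :
    cfc (fun x : ℝ ↦ x ^ β) a * cfc (fun x : ℝ ↦ x ^ β) a ≤ 1 := by
  have hspec₁ := (CFC.le_one_iff (R := ℝ) a).mp ha₁
  rw [← cfc_mul .., cfc_le_one_iff ..]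
  intro x hx
  have hx₀ : 0 ≤ x := spectrum_nonneg_of_nonneg ha₀ hx
  have hxβ : x ^ β ≤ 1 := Real.rpow_le_one hx₀ (hspec₁ x hx) hβ
  nlinarith [Real.rpow_nonneg hx₀ β]

namespace Matrix

variable {m : Type*} [Fintype m]

lemma sum_norm_diag_conjTranspose_mul_le (P Q : Matrix m m ℂ) :
    ∑ j, ‖(Pᴴ * Q) j j‖ ≤ √(Pᴴ * P).trace.re * √(Qᴴ * Q).trace.re := by
  have trace_eq (M : Matrix m m ℂ) : (Mᴴ * M).trace.re = ∑ j, ∑ k, ‖M k j‖ ^ 2 := by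
    simp [trace, mul_apply, ← Complex.normSq_eq_norm_sq, Complex.normSq_apply, Complex.re_sum]
  calc ∑ j, ‖(Pᴴ * Q) j j‖ ≤ ∑ j, ∑ k, ‖P k j‖ * ‖Q k j‖ := by
        gcongr with j
        refine (norm_sum_le _ _).trans_eq ?_
        simp [conjTranspose_apply]
    _ ≤ √(∑ j, ∑ k, ‖P k j‖ ^ 2) * √(∑ j, ∑ k, ‖Q k j‖ ^ 2) := by
        simpa [Fintype.sum_prod_type] using
          Real.sum_mul_le_sqrt_mul_sqrt Finset.univ (fun x : m × m ↦ ‖P x.2 x.1‖)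
            (fun x ↦ ‖Q x.2 x.1‖)
    _ = √(Pᴴ * P).trace.re * √(Qᴴ * Q).trace.re := by rw [trace_eq, trace_eq]

variable [DecidableEq m]

lemma trace_mul_mul_le_trace {X B : Matrix m m ℂ} (hX : 0 ≤ X) (hB : B * B ≤ 1) :
    (B * X * B).trace ≤ X.trace := by
  have hRR : CFC.sqrt X * CFC.sqrt X = X := CFC.sqrt_mul_sqrt_self X
  have hconj := conjugate_le_conjugate_of_nonneg hB (CFC.sqrt_nonneg X)
  rw [mul_one, hRR] at hconj
  calc (B * X * B).trace = (CFC.sqrt X * (B * B) * CFC.sqrt X).trace := by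
        conv_lhs => rw [trace_mul_cycle, ← hRR, ← mul_assoc, trace_mul_cycle]
    _ ≤ X.trace := (tracePositiveLinearMap m ℂ ℂ).monotone hconj

lemma IsHermitian.trace_cfc {H : Matrix m m ℂ} (hH : H.IsHermitian) (f : ℝ → ℝ) :
    (cfc f H).trace = ∑ i, (f (hH.eigenvalues i) : ℂ) := by
  rw [hH.cfc_eq, IsHermitian.cfc, Unitary.conjStarAlgAut_apply, trace_mul_cycle,
    Unitary.coe_star_mul_self, one_mul, trace_diagonal]
  rfl

end Matrix

variable {n : ℕ}

lemma matFun_eq_cfc {Y : Matrix (Fin n) (Fin n) ℂ} (hY : Y.IsHermitian) (f : ℝ → ℝ) :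
    matFun f Y = cfc f Y := by
  rw [matFun, dif_pos hY, hY.cfc_eq, IsHermitian.cfc, Unitary.conjStarAlgAut_apply]
  rfl

lemma traceNorm_eq_trace_abs (A : Matrix (Fin n) (Fin n) ℂ) :
    traceNorm A = (CFC.abs A).trace.re := by
  have hA := posSemidef_conjTranspose_mul_self A
  rw [CFC.abs, star_eq_conjTranspose, CFC.sqrt_eq_real_sqrt _ hA.nonneg, cfcₙ_eq_cfc,
    hA.isHermitian.cfc_eq, IsHermitian.cfc, Unitary.conjStarAlgAut_apply]
  rfl

lemma traceNorm_smul (c : ℂ) (A : Matrix (Fin n) (Fin n) ℂ) :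
    traceNorm (c • A) = ‖c‖ * traceNorm A := by
  rw [traceNorm_eq_trace_abs, traceNorm_eq_trace_abs, CFC.abs_smul]
  simp

lemma Matrix.IsHermitian.traceNorm_eq_sum_abs_eigenvalues {H : Matrix (Fin n) (Fin n) ℂ}
    (hH : H.IsHermitian) : traceNorm H = ∑ i, |hH.eigenvalues i| := by
  rw [traceNorm_eq_trace_abs, CFC.abs_eq_cfc_norm H hH.isSelfAdjoint, hH.trace_cfc]
  simp [← Complex.ofReal_sum]

lemma Matrix.IsHermitian.traceNorm_eq_sum_norm_diag {H : Matrix (Fin n) (Fin n) ℂ}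
    (hH : H.IsHermitian) :
    traceNorm H = ∑ j, ‖(star (hH.eigenvectorUnitary : Matrix (Fin n) (Fin n) ℂ) * H *
      hH.eigenvectorUnitary) j j‖ := by
  have hdiag := hH.conjStarAlgAut_star_eigenvectorUnitary
  rw [Unitary.conjStarAlgAut_star_apply] at hdiag
  simp [hdiag, hH.traceNorm_eq_sum_abs_eigenvalues]

lemma exists_unitary_traceNorm_eq_sum_norm_diag_of_conjTranspose_eq_neg
    {A : Matrix (Fin n) (Fin n) ℂ} (hA : Aᴴ = -A) :
    ∃ V ∈ unitary (Matrix (Fin n) (Fin n) ℂ), traceNorm A = ∑ j, ‖(star V * A * V) j j‖ := by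
  have hH : (Complex.I • A).IsHermitian := by
    simp [IsHermitian, conjTranspose_smul, hA]
  refine ⟨_, hH.eigenvectorUnitary.2, ?_⟩
  rw [← one_mul (traceNorm A), ← Complex.norm_I, ← traceNorm_smul,
    hH.traceNorm_eq_sum_norm_diag]
  simp

theorem traceNorm_commutator_le {X B : Matrix (Fin n) (Fin n) ℂ} (hX : 0 ≤ X)
    (hB : B.IsHermitian) (hBB : B * B ≤ 1) :
    traceNorm (X * B - B * X) ≤ 2 * X.trace.re := by
  have hXh : Xᴴ = X := (IsSelfAdjoint.of_nonneg hX).star_eq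
  obtain ⟨V, hV, hnorm⟩ := exists_unitary_traceNorm_eq_sum_norm_diag_of_conjTranspose_eq_neg
    (A := X * B - B * X) (by simp [conjTranspose_mul, hXh, hB.eq])
  set R := CFC.sqrt X
  have hR : Rᴴ = R := (CFC.sqrt_nonneg X).isSelfAdjoint.star_eq
  have hRR : R * R = X := CFC.sqrt_mul_sqrt_self X
  have hVV : V * star V = 1 := Unitary.mul_star_self_of_mem hV
  set P := R * V
  set Q := R * B * V
  have hdiag (j) : ‖(star V * (X * B - B * X) * V) j j‖ ≤ 2 * ‖(Pᴴ * Q) j j‖ := by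
    have hG : star V * (X * B - B * X) * V = Pᴴ * Q - (Pᴴ * Q)ᴴ := by
      simp only [P, Q, conjTranspose_mul, hR, hB.eq, ← hRR, star_eq_conjTranspose,
        conjTranspose_conjTranspose]
      noncomm_ring
    rw [hG, Matrix.sub_apply, conjTranspose_apply]
    exact (norm_sub_le _ _).trans_eq (by rw [norm_star]; ring)
  have hP : (Pᴴ * P).trace.re = X.trace.re := by
    rw [show Pᴴ * P = star V * X * V by
      simp only [P, conjTranspose_mul, hR, ← hRR, star_eq_conjTranspose, mul_assoc],
      trace_mul_cycle, hVV, one_mul]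
  have hQ : (Qᴴ * Q).trace.re ≤ X.trace.re := by
    rw [show Qᴴ * Q = star V * (B * X * B) * V by
      simp only [Q, conjTranspose_mul, hR, hB.eq, ← hRR, star_eq_conjTranspose, mul_assoc],
      trace_mul_cycle, hVV, one_mul]
    exact (Complex.le_def.mp (trace_mul_mul_le_trace hX hBB)).1
  calc traceNorm (X * B - B * X) ≤ ∑ j, 2 * ‖(Pᴴ * Q) j j‖ := by
        rw [hnorm]; exact Finset.sum_le_sum fun j _ ↦ hdiag j
    _ = 2 * ∑ j, ‖(Pᴴ * Q) j j‖ := (Finset.mul_sum ..).symm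
    _ ≤ 2 * (√(Pᴴ * P).trace.re * √(Qᴴ * Q).trace.re) := by
        gcongr; exact sum_norm_diag_conjTranspose_mul_le P Q
    _ ≤ 2 * (√X.trace.re * √X.trace.re) := by rw [hP]; gcongr
    _ = 2 * X.trace.re := by
        rw [Real.mul_self_sqrt (Complex.nonneg_iff.mp hX.posSemidef.trace_nonneg).1]

theorem commutator_rpow_bound_ge_one_general {n : ℕ} (β : ℝ) (hβ : 1 ≤ β)
    (p : ℝ) (hp0 : 0 < p)
    (hpβ : p ^ β < β + 1 - Real.sqrt ((β + 1) ^ 2 - 1))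
    (X Y : Matrix (Fin n) (Fin n) ℂ)
    (hX : X.PosSemidef) (hXY : (Y - X).PosSemidef)
    (hYI : ((1 : Matrix (Fin n) (Fin n) ℂ) - Y).PosSemidef)
    (hTrX : X.trace = (p : ℂ)) :
    traceNorm (X * matFun (fun t => t ^ β) Y - matFun (fun t => t ^ β) Y * X) ≤
      9 * p * (1 - p ^ β) := by
  have hY₀ : 0 ≤ Y := hX.nonneg.trans (Matrix.le_iff.mpr hXY)
  have hY₁ : Y ≤ 1 := Matrix.le_iff.mpr hYI
  have hcomm := traceNorm_commutator_le hX.nonneg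
    (cfc_predicate (fun t : ℝ ↦ t ^ β) Y).isHermitian
    (cfc_rpow_mul_self_le_one hY₀ hY₁ (by linarith : (0 : ℝ) ≤ β))
  have hpβ_half : p ^ β ≤ 1 / 2 :=
    hpβ.le.trans (sub_sqrt_sq_sub_one_le_half (by linarith))
  rw [hTrX, Complex.ofReal_re] at hcomm
  rw [matFun_eq_cfc (IsSelfAdjoint.of_nonneg hY₀).isHermitian]
  nlinarith

theorem commutator_rpow_bound_ge_one {n : ℕ} (hn : 1 ≤ n) (β : ℝ) (hβ : 1 ≤ β)
    (p : ℝ) (hp0 : 0 < p) (hp1 : p < 1)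
    (hpβ : p ^ β < β + 1 - Real.sqrt ((β + 1) ^ 2 - 1))
    (X Y : Matrix (Fin n) (Fin n) ℂ)
    (hX : X.PosSemidef) (hXY : (Y - X).PosSemidef)
    (hYI : ((1 : Matrix (Fin n) (Fin n) ℂ) - Y).PosSemidef)
    (hTrX : X.trace = (p : ℂ)) (hTrY : Y.trace = 1) :
    traceNorm (X * matFun (fun t => t ^ β) Y - matFun (fun t => t ^ β) Y * X) ≤
      9 * p * (1 - p ^ β) :=
  commutator_rpow_bound_ge_one_general β hβ p hp0 hpβ X Y hX hXY hYI hTrX
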